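/- Let d ≥ 1 and let A be a finite family of n affine hyperplanes in ℝ^d. Then the complement ℝ^d \ ⋃_{H∈A} H has at most Φ(n, d) = ∑_{j=0}^{d} binomial(n, j) connected components, and if A is in general position then the number of connected components is exactly Φ(n, d). -/

import Mathlib

/-- Zaslavsky's function `Φ(n, d) = ∑_{j=0}^{d} C(n, j)`. -/
def Phi (n d : ℕ) : ℕ := ∑ j ∈ Finset.range (d + 1), Nat.choose n j

/-- The number of connected components of a subset (with the subspace topology). -/
noncomputable def numComponents {X : Type*} [TopologicalSpace X] (S : Set X) : ℕ :=
  Nat.card (ConnectedComponents ↥S)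

/-- A family of affine hyperplanes `H_i = {x : f_i(x) = c_i}` in `ℝ^d` is in general
position if: any `j` of them (for `1 ≤ j ≤ d`) intersect in a nonempty affine
subspace of dimension `d - j`, and any `d + 1` of them have empty intersection. -/
def InGeneralPosition {d n : ℕ} (f : Fin n → ((Fin d → ℝ) →ₗ[ℝ] ℝ)) (c : Fin n → ℝ) :
    Prop :=
  (∀ s : Finset (Fin n), s.Nonempty → s.card ≤ d →
    ∃ S : AffineSubspace ℝ (Fin d → ℝ),
      (S : Set (Fin d → ℝ)) = (⋂ i ∈ s, {x : Fin d → ℝ | f i x = c i}) ∧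
      (S : Set (Fin d → ℝ)).Nonempty ∧
      Module.finrank ℝ S.direction = d - s.card) ∧
  (∀ s : Finset (Fin n), s.card = d + 1 →
    (⋂ i ∈ s, {x : Fin d → ℝ | f i x = c i}) = ∅)


open Module Finset Filter Topology

section ZasProof
variable {d : ℕ}
local notation "Lin" => (Fin d → ℝ) →ₗ[ℝ] ℝ


lemma Phi_zero_left (m : ℕ) : Phi 0 m = 1 := by
  unfold Phi
  rw [Finset.sum_eq_single_of_mem 0 (by simp) (by intro b _ hb; cases b with
    | zero => exact absurd rfl hb
    | succ k => simp [Nat.choose])]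
  simp

lemma Phi_zero_right (n : ℕ) : Phi n 0 = 1 := by simp [Phi]

lemma Phi_succ (n k : ℕ) : Phi n (k+1) = Phi n k + Nat.choose n (k+1) := by
  simp [Phi, Finset.sum_range_succ]

lemma Phi_pascal (n k : ℕ) : Phi (n+1) (k+1) = Phi n (k+1) + Phi n k := by
  induction k with
  | zero => simp [Phi_succ, Phi_zero_right]; omega
  | succ k ih =>
      rw [Phi_succ (n+1) (k+1), ih, Phi_succ n (k+1), Phi_succ n k,
        Nat.choose_succ_succ (n) (k+1)]
      ring

lemma Phi_mono_left (n m : ℕ) : Phi n m ≤ Phi (n+1) m :=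
  Finset.sum_le_sum fun j _ => Nat.choose_le_choose j (Nat.le_succ n)

noncomputable def hyp (h : Lin) (e : ℝ) : AffineSubspace ℝ (Fin d → ℝ) where
  carrier := {x | h x = e}
  smul_vsub_vadd_mem' := by
    intro t p₁ p₂ p₃ h1 h2 h3
    simp only [Set.mem_setOf_eq] at *
    simp [vsub_eq_sub, vadd_eq_add, map_add, map_sub, map_smul, h1, h2, h3]

lemma mem_hyp {h : Lin} {e : ℝ} {x : Fin d → ℝ} : x ∈ hyp h e ↔ h x = e := Iff.rfl

lemma mem_inf' {S T : AffineSubspace ℝ (Fin d → ℝ)} {x : Fin d → ℝ} :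
    x ∈ S ⊓ T ↔ x ∈ S ∧ x ∈ T := Iff.rfl

lemma exists_mem_inf_hyp (S : AffineSubspace ℝ (Fin d → ℝ)) (h : Lin) (e : ℝ)
    {p v : Fin d → ℝ} (hp : p ∈ S) (hv : v ∈ S.direction) (hnv : h v ≠ 0) :
    ((S ⊓ hyp h e : AffineSubspace ℝ (Fin d → ℝ)) : Set (Fin d → ℝ)).Nonempty := by
  refine ⟨((e - h p) / h v) • v + p, ?_⟩
  have hmem : ((e - h p) / h v) • v + p ∈ S := by
    have := AffineSubspace.vadd_mem_of_mem_direction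
      (S.direction.smul_mem ((e - h p) / h v) hv) hp
    simpa [vadd_eq_add] using this
  refine mem_inf'.mpr ⟨hmem, mem_hyp.mpr ?_⟩
  simp only [map_add, map_smul, smul_eq_mul]
  field_simp
  ring

lemma direction_inf_hyp_le_ker (S : AffineSubspace ℝ (Fin d → ℝ)) (h : Lin) (e : ℝ)
    {u : Fin d → ℝ} (hu : u ∈ (S ⊓ hyp h e).direction)
    (hne : ((S ⊓ hyp h e : AffineSubspace ℝ (Fin d → ℝ)) : Set (Fin d → ℝ)).Nonempty) :
    h u = 0 := by
  rw [AffineSubspace.mem_direction_iff_eq_vsub hne] at hu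
  obtain ⟨p1, hp1, p2, hp2, rfl⟩ := hu
  have h1 := mem_hyp.mp (mem_inf'.mp hp1).2
  have h2 := mem_hyp.mp (mem_inf'.mp hp2).2
  simp [vsub_eq_sub, map_sub, h1, h2]

lemma finrank_inf_hyp_lt (S : AffineSubspace ℝ (Fin d → ℝ)) (h : Lin) (e : ℝ)
    {v : Fin d → ℝ} (hv : v ∈ S.direction) (hnv : h v ≠ 0)
    (hne : ((S ⊓ hyp h e : AffineSubspace ℝ (Fin d → ℝ)) : Set (Fin d → ℝ)).Nonempty) :
    finrank ℝ (S ⊓ hyp h e).direction < finrank ℝ S.direction := by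
  have hle : (S ⊓ hyp h e).direction ≤ S.direction :=
    AffineSubspace.direction_le inf_le_left
  have hlt : (S ⊓ hyp h e).direction < S.direction := by
    refine lt_of_le_of_ne hle (fun heq => hnv ?_)
    exact direction_inf_hyp_le_ker S h e (heq ▸ hv) hne
  exact Submodule.finrank_lt_finrank_of_lt hlt

lemma coe_inf_aff (S T : AffineSubspace ℝ (Fin d → ℝ)) :
    ((S ⊓ T : AffineSubspace ℝ (Fin d → ℝ)) : Set (Fin d → ℝ))
      = (S : Set (Fin d → ℝ)) ∩ (T : Set (Fin d → ℝ)) := rfl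

noncomputable def realized {n : ℕ} (f : Fin n → Lin) (c : Fin n → ℝ)
    (S : AffineSubspace ℝ (Fin d → ℝ)) : Finset (Fin n → Bool) :=
  letI := Classical.dec
  Finset.univ.filter (fun σ => ∃ x ∈ S, ∀ i, 0 < (if σ i then (1:ℝ) else -1) * (f i x - c i))

lemma mem_realized {n : ℕ} {f : Fin n → Lin} {c : Fin n → ℝ}
    {S : AffineSubspace ℝ (Fin d → ℝ)} {σ : Fin n → Bool} :
    σ ∈ realized f c S ↔ ∃ x ∈ S, ∀ i, 0 < (if σ i then (1:ℝ) else -1) * (f i x - c i) := by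
  classical simp [realized]

-- degenerate: f last is constant on S
lemma card_realized_succ_const {n : ℕ} (f : Fin (n+1) → Lin) (c : Fin (n+1) → ℝ)
    (S : AffineSubspace ℝ (Fin d → ℝ))
    (hconst : ∀ u ∈ S.direction, f (Fin.last n) u = 0) :
    (realized f c S).card ≤ (realized (f ∘ Fin.castSucc) (c ∘ Fin.castSucc) S).card := by
  classical
  set r : (Fin (n+1) → Bool) → (Fin n → Bool) := fun σ => σ ∘ Fin.castSucc with hr
  have himg : (realized f c S).image r ⊆ realized (f ∘ Fin.castSucc) (c ∘ Fin.castSucc) S := by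
    intro σ' hσ'
    obtain ⟨σ, hσ, rfl⟩ := Finset.mem_image.mp hσ'
    obtain ⟨x, hxS, hx⟩ := mem_realized.mp hσ
    exact mem_realized.mpr ⟨x, hxS, fun i => hx (Fin.castSucc i)⟩
  have hinj : Set.InjOn r ↑(realized f c S) := by
    intro σ1 h1 σ2 h2 hreq
    simp only [Finset.mem_coe] at h1 h2
    obtain ⟨x, hxS, hx⟩ := mem_realized.mp h1
    obtain ⟨y, hyS, hy⟩ := mem_realized.mp h2
    have hval : f (Fin.last n) x - c (Fin.last n) = f (Fin.last n) y - c (Fin.last n) := by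
      have hmem : x -ᵥ y ∈ S.direction := AffineSubspace.vsub_mem_direction hxS hyS
      have := hconst _ hmem
      simp only [vsub_eq_sub, map_sub] at this
      linarith
    have h1l := hx (Fin.last n)
    have h2l := hy (Fin.last n)
    rw [← hval] at h2l
    have hlast : σ1 (Fin.last n) = σ2 (Fin.last n) := by
      rcases hb1 : σ1 (Fin.last n) <;> rcases hb2 : σ2 (Fin.last n) <;>
        rw [hb1] at h1l <;> rw [hb2] at h2l <;> simp_all <;> linarith
    funext i
    refine Fin.lastCases hlast (fun j => congrFun hreq j) i
  calc (realized f c S).card = ((realized f c S).image r).card :=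
        (Finset.card_image_of_injOn hinj).symm
    _ ≤ _ := Finset.card_le_card himg

lemma cross' {n : ℕ} (f : Fin n → Lin) (c : Fin n → ℝ) (σ : Fin n → Bool)
    (h : Lin) (e : ℝ) (S : AffineSubspace ℝ (Fin d → ℝ)) {x y : Fin d → ℝ}
    (hx : x ∈ S) (hy : y ∈ S)
    (hσx : ∀ i, 0 < (if σ i then (1:ℝ) else -1) * (f i x - c i))
    (hσy : ∀ i, 0 < (if σ i then (1:ℝ) else -1) * (f i y - c i))
    (hhx : 0 < h x - e) (hhy : h y - e < 0) :
    ∃ z ∈ S, h z = e ∧ ∀ i, 0 < (if σ i then (1:ℝ) else -1) * (f i z - c i) := by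
  set a := h x - e with ha
  set b := h y - e with hb
  have hab : 0 < a - b := by linarith
  set t := a / (a - b) with ht
  have ht0 : 0 < t := div_pos hhx hab
  have ht1 : t ≤ 1 := by
    rw [ht, div_le_one hab]; linarith
  refine ⟨t • (y -ᵥ x) +ᵥ x, S.smul_vsub_vadd_mem t hy hx hx, ?_, ?_⟩
  · have hc : h (t • (y - x) + x) = t * (h y - h x) + h x := by
      simp only [map_add, map_smul, map_sub, smul_eq_mul]
    show h (t • (y - x) + x) = e
    rw [hc]
    have hxy : h y - h x = b - a := by rw [ha, hb]; ring
    rw [hxy, ht]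
    have hne : a - b ≠ 0 := ne_of_gt hab
    field_simp
    linear_combination (b - a) * ha
  · intro i
    have hfz : f i (t • (y - x) + x) - c i
        = (1 - t) * (f i x - c i) + t * (f i y - c i) := by
      simp only [map_add, map_smul, map_sub, smul_eq_mul]
      ring
    show 0 < (if σ i then (1:ℝ) else -1) * (f i (t • (y - x) + x) - c i)
    rw [hfz]
    have h1 := hσx i
    have h2 := hσy i
    rcases hει : σ i with _|_ <;> simp only [hει, if_true, if_false] at h1 h2 ⊢ <;> nlinarith

lemma perturb' {n : ℕ} (f : Fin n → Lin) (c : Fin n → ℝ) (σ : Fin n → Bool)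
    (h : Lin) (e : ℝ) (S : AffineSubspace ℝ (Fin d → ℝ)) {z v : Fin d → ℝ}
    (hz : z ∈ S) (hσz : ∀ i, 0 < (if σ i then (1:ℝ) else -1) * (f i z - c i))
    (hze : h z = e) (hv : v ∈ S.direction) (hnv : h v ≠ 0) :
    (∃ x ∈ S, (∀ i, 0 < (if σ i then (1:ℝ) else -1) * (f i x - c i)) ∧ 0 < h x - e) ∧
    (∃ y ∈ S, (∀ i, 0 < (if σ i then (1:ℝ) else -1) * (f i y - c i)) ∧ h y - e < 0) := by
  obtain ⟨w, hw, hpw⟩ : ∃ w ∈ S.direction, 0 < h w := by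
    rcases lt_or_gt_of_ne hnv with hlt | hgt
    · exact ⟨-v, S.direction.neg_mem hv, by simpa using hlt⟩
    · exact ⟨v, hv, hgt⟩
  have hev : ∀ᶠ t in 𝓝 (0:ℝ),
      ∀ i, 0 < (if σ i then (1:ℝ) else -1) * (f i (t • w + z) - c i) := by
    refine eventually_all.mpr ?_
    intro i
    set F : ℝ → ℝ := fun t => (if σ i then (1:ℝ) else -1) * (f i (t • w + z) - c i) with hF
    have hcont : Continuous F := by
      have h1 : Continuous (f i) := (f i).continuous_of_finiteDimensional
      fun_prop
    have hpos : (0:ℝ) < F 0 := by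
      have : F 0 = (if σ i then (1:ℝ) else -1) * (f i z - c i) := by simp [hF]
      rw [this]; exact hσz i
    exact (hcont.tendsto 0).eventually (eventually_gt_nhds hpos)
  have hmem : ∀ t : ℝ, t • w + z ∈ S := fun t => by
    have := AffineSubspace.vadd_mem_of_mem_direction (S.direction.smul_mem t hw) hz
    simpa [vadd_eq_add] using this
  have hval : ∀ t : ℝ, h (t • w + z) - e = t * h w := fun t => by
    simp [map_add, map_smul, hze, smul_eq_mul]
  constructor
  · have h1 : ∀ᶠ t in 𝓝[>] (0:ℝ),
        ∀ i, 0 < (if σ i then (1:ℝ) else -1) * (f i (t • w + z) - c i) :=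
      hev.filter_mono nhdsWithin_le_nhds
    obtain ⟨t, ht, htpos⟩ := (h1.and eventually_mem_nhdsWithin).exists
    exact ⟨t • w + z, hmem t, ht, by rw [hval]; exact mul_pos (Set.mem_Ioi.mp htpos) hpw⟩
  · have h1 : ∀ᶠ t in 𝓝[<] (0:ℝ),
        ∀ i, 0 < (if σ i then (1:ℝ) else -1) * (f i (t • w + z) - c i) :=
      hev.filter_mono nhdsWithin_le_nhds
    obtain ⟨t, ht, htneg⟩ := (h1.and eventually_mem_nhdsWithin).exists
    exact ⟨t • w + z, hmem t, ht, by
      rw [hval]; exact mul_neg_of_neg_of_pos (Set.mem_Iio.mp htneg) hpw⟩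

lemma snoc_realizes {n : ℕ} (f : Fin (n+1) → Lin) (c : Fin (n+1) → ℝ)
    (σ' : Fin n → Bool) (b : Bool) (x : Fin d → ℝ)
    (h1 : ∀ i : Fin n,
      0 < (if σ' i then (1:ℝ) else -1) * (f (Fin.castSucc i) x - c (Fin.castSucc i)))
    (h2 : 0 < (if b then (1:ℝ) else -1) * (f (Fin.last n) x - c (Fin.last n))) :
    ∀ i, 0 < (if Fin.snoc (α := fun _ => Bool) σ' b i = true then (1:ℝ) else -1) * (f i x - c i) := by
  intro i
  refine Fin.lastCases ?_ ?_ i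
  · simpa [Fin.snoc_last] using h2
  · intro j; simpa [Fin.snoc_castSucc] using h1 j

lemma card_realized_succ {n : ℕ} (f : Fin (n+1) → Lin) (c : Fin (n+1) → ℝ)
    (S : AffineSubspace ℝ (Fin d → ℝ)) {v : Fin d → ℝ}
    (hv : v ∈ S.direction) (hnv : f (Fin.last n) v ≠ 0) :
    (realized f c S).card
      = (realized (f ∘ Fin.castSucc) (c ∘ Fin.castSucc) S).card
        + (realized (f ∘ Fin.castSucc) (c ∘ Fin.castSucc)
            (S ⊓ hyp (f (Fin.last n)) (c (Fin.last n)))).card := by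
  classical
  set A := realized f c S with hA
  set D := realized (f ∘ Fin.castSucc) (c ∘ Fin.castSucc) S with hD
  set R := realized (f ∘ Fin.castSucc) (c ∘ Fin.castSucc)
      (S ⊓ hyp (f (Fin.last n)) (c (Fin.last n))) with hR
  set r : (Fin (n+1) → Bool) → (Fin n → Bool) := fun σ => σ ∘ Fin.castSucc with hr
  set At := A.filter (fun σ => σ (Fin.last n) = true) with hAt
  set Af := A.filter (fun σ => σ (Fin.last n) = false) with hAf
  have hinj : ∀ b : Bool, Set.InjOn r ↑(A.filter (fun σ => σ (Fin.last n) = b)) := by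
    intro b σ1 h1 σ2 h2 hreq
    simp only [Finset.coe_filter, Set.mem_setOf_eq] at h1 h2
    funext i
    refine Fin.lastCases ?_ ?_ i
    · rw [h1.2, h2.2]
    · intro j; exact congrFun hreq j
  -- image is inside D
  have himg : ∀ σ ∈ A, r σ ∈ D := by
    intro σ hσ
    obtain ⟨x, hxS, hx⟩ := mem_realized.mp hσ
    exact mem_realized.mpr ⟨x, hxS, fun i => hx (Fin.castSucc i)⟩
  have hU : At.image r ∪ Af.image r = D := by
    apply Finset.Subset.antisymm
    · intro σ' hσ'
      rcases Finset.mem_union.mp hσ' with h' | h' <;>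
      · obtain ⟨σ, hσ, rfl⟩ := Finset.mem_image.mp h'
        exact himg σ (Finset.mem_filter.mp hσ).1
    · intro σ' hσ'
      obtain ⟨x, hxS, hx⟩ := mem_realized.mp hσ'
      rcases lt_trichotomy (f (Fin.last n) x - c (Fin.last n)) 0 with hlt | heq | hgt
      · apply Finset.mem_union_right
        refine Finset.mem_image.mpr ⟨Fin.snoc σ' false, ?_, ?_⟩
        · refine Finset.mem_filter.mpr ⟨mem_realized.mpr ⟨x, hxS, ?_⟩, by simp⟩
          exact snoc_realizes f c σ' false x hx (by simpa using hlt)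
        · funext j; simp [hr, Fin.snoc_castSucc]
      · obtain ⟨⟨x', hx'S, hx', hx'pos⟩, -⟩ := perturb' (f ∘ Fin.castSucc) (c ∘ Fin.castSucc)
          σ' (f (Fin.last n)) (c (Fin.last n)) S hxS hx (by linarith) hv hnv
        apply Finset.mem_union_left
        refine Finset.mem_image.mpr ⟨Fin.snoc σ' true, ?_, ?_⟩
        · refine Finset.mem_filter.mpr ⟨mem_realized.mpr ⟨x', hx'S, ?_⟩, by simp⟩
          exact snoc_realizes f c σ' true x' hx' (by simpa using hx'pos)
        · funext j; simp [hr, Fin.snoc_castSucc]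
      · apply Finset.mem_union_left
        refine Finset.mem_image.mpr ⟨Fin.snoc σ' true, ?_, ?_⟩
        · refine Finset.mem_filter.mpr ⟨mem_realized.mpr ⟨x, hxS, ?_⟩, by simp⟩
          exact snoc_realizes f c σ' true x hx (by simpa using hgt)
        · funext j; simp [hr, Fin.snoc_castSucc]
  have hI : At.image r ∩ Af.image r = R := by
    apply Finset.Subset.antisymm
    · intro σ' hσ'
      obtain ⟨h1, h2⟩ := Finset.mem_inter.mp hσ'
      obtain ⟨σ1, hσ1, hrσ1⟩ := Finset.mem_image.mp h1
      obtain ⟨σ2, hσ2, hrσ2⟩ := Finset.mem_image.mp h2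
      obtain ⟨hσ1A, hσ1t⟩ := Finset.mem_filter.mp hσ1
      obtain ⟨hσ2A, hσ2f⟩ := Finset.mem_filter.mp hσ2
      obtain ⟨x, hxS, hx⟩ := mem_realized.mp hσ1A
      obtain ⟨y, hyS, hy⟩ := mem_realized.mp hσ2A
      have hhx : 0 < f (Fin.last n) x - c (Fin.last n) := by
        have := hx (Fin.last n); rw [hσ1t] at this; simpa using this
      have hhy : f (Fin.last n) y - c (Fin.last n) < 0 := by
        have := hy (Fin.last n); rw [hσ2f] at this; simp at this; linarith
      have hσx : ∀ i : Fin n, 0 < (if σ' i then (1:ℝ) else -1)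
          * ((f ∘ Fin.castSucc) i x - (c ∘ Fin.castSucc) i) := by
        intro i
        have := hx (Fin.castSucc i)
        rw [← hrσ1]; exact this
      have hσy : ∀ i : Fin n, 0 < (if σ' i then (1:ℝ) else -1)
          * ((f ∘ Fin.castSucc) i y - (c ∘ Fin.castSucc) i) := by
        intro i
        have := hy (Fin.castSucc i)
        rw [← hrσ2]; exact this
      obtain ⟨z, hzS, hze, hz⟩ := cross' (f ∘ Fin.castSucc) (c ∘ Fin.castSucc) σ'
        (f (Fin.last n)) (c (Fin.last n)) S hxS hyS hσx hσy hhx hhy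
      exact mem_realized.mpr ⟨z, mem_inf'.mpr ⟨hzS, mem_hyp.mpr hze⟩, hz⟩
    · intro σ' hσ'
      obtain ⟨z, hzS, hz⟩ := mem_realized.mp hσ'
      obtain ⟨hzS', hzH⟩ := mem_inf'.mp hzS
      obtain ⟨⟨x, hxS, hx, hxpos⟩, ⟨y, hyS, hy, hyneg⟩⟩ := perturb'
        (f ∘ Fin.castSucc) (c ∘ Fin.castSucc) σ' (f (Fin.last n)) (c (Fin.last n)) S
        hzS' hz (mem_hyp.mp hzH) hv hnv
      refine Finset.mem_inter.mpr ⟨?_, ?_⟩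
      · refine Finset.mem_image.mpr ⟨Fin.snoc σ' true, ?_, ?_⟩
        · refine Finset.mem_filter.mpr ⟨mem_realized.mpr ⟨x, hxS, ?_⟩, by simp⟩
          exact snoc_realizes f c σ' true x hx (by simpa using hxpos)
        · funext j; simp [hr, Fin.snoc_castSucc]
      · refine Finset.mem_image.mpr ⟨Fin.snoc σ' false, ?_, ?_⟩
        · refine Finset.mem_filter.mpr ⟨mem_realized.mpr ⟨y, hyS, ?_⟩, by simp⟩
          exact snoc_realizes f c σ' false y hy (by simpa using hyneg)
        · funext j; simp [hr, Fin.snoc_castSucc]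
  have hsplit : A.card = At.card + Af.card := by
    have hnegf : A.filter (fun σ => ¬ σ (Fin.last n) = true) = Af := by
      apply Finset.filter_congr; intro σ _; simp
    rw [hAt, ← hnegf, Finset.card_filter_add_card_filter_not]
  calc A.card = At.card + Af.card := hsplit
    _ = (At.image r).card + (Af.image r).card := by
        rw [Finset.card_image_of_injOn (hinj true), Finset.card_image_of_injOn (hinj false)]
    _ = (At.image r ∪ Af.image r).card + (At.image r ∩ Af.image r).card :=
        (Finset.card_union_add_card_inter _ _).symm
    _ = D.card + R.card := by rw [hU, hI]

lemma card_realized_zero (f : Fin 0 → Lin) (c : Fin 0 → ℝ)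
    (S : AffineSubspace ℝ (Fin d → ℝ)) (hS : (S : Set (Fin d → ℝ)).Nonempty) :
    (realized f c S).card = 1 := by
  classical
  have : realized f c S = Finset.univ := by
    apply Finset.eq_univ_of_forall
    intro σ
    obtain ⟨p, hp⟩ := hS
    exact mem_realized.mpr ⟨p, hp, fun i => i.elim0⟩
  rw [this]
  simp

lemma card_realized_le : ∀ {n : ℕ} (f : Fin n → Lin) (c : Fin n → ℝ)
    (S : AffineSubspace ℝ (Fin d → ℝ)), (S : Set (Fin d → ℝ)).Nonempty →
    ∀ m : ℕ, finrank ℝ S.direction ≤ m → (realized f c S).card ≤ Phi n m := by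
  intro n
  induction n with
  | zero =>
      intro f c S hS m _
      rw [card_realized_zero f c S hS, Phi_zero_left]
  | succ n ih =>
      intro f c S hS m hm
      by_cases hconst : ∀ u ∈ S.direction, f (Fin.last n) u = 0
      · exact le_trans (card_realized_succ_const f c S hconst)
          (le_trans (ih _ _ S hS m hm) (Phi_mono_left n m))
      · push_neg at hconst
        obtain ⟨v, hv, hnv⟩ := hconst
        obtain ⟨p, hp⟩ := hS
        have hne := exists_mem_inf_hyp S (f (Fin.last n)) (c (Fin.last n)) hp hv hnv
        have hlt := finrank_inf_hyp_lt S (f (Fin.last n)) (c (Fin.last n)) hv hnv hne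
        obtain ⟨k, rfl⟩ : ∃ k, m = k + 1 := ⟨m - 1, by omega⟩
        rw [card_realized_succ f c S hv hnv, Phi_pascal]
        have h1 := ih (f ∘ Fin.castSucc) (c ∘ Fin.castSucc) S ⟨p, hp⟩ (k+1) hm
        have h2 := ih (f ∘ Fin.castSucc) (c ∘ Fin.castSucc) _ hne k (by omega)
        omega

/-- relative general position -/
def GP' {n : ℕ} (f : Fin n → Lin) (c : Fin n → ℝ) (S : AffineSubspace ℝ (Fin d → ℝ))
    (m : ℕ) : Prop :=
  (∀ s : Finset (Fin n), s.Nonempty → s.card ≤ m →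
    ∃ T : AffineSubspace ℝ (Fin d → ℝ),
      (T : Set (Fin d → ℝ))
        = (S : Set (Fin d → ℝ)) ∩ ⋂ i ∈ s, {x : Fin d → ℝ | f i x = c i} ∧
      (T : Set (Fin d → ℝ)).Nonempty ∧ finrank ℝ T.direction = m - s.card) ∧
  (∀ s : Finset (Fin n), s.card = m + 1 →
    (S : Set (Fin d → ℝ)) ∩ (⋂ i ∈ s, {x : Fin d → ℝ | f i x = c i}) = ∅)

lemma biInter_map {α β X : Type*} (s : Finset α) (e : α ↪ β) (g : β → Set X) :
    ⋂ i ∈ s.map e, g i = ⋂ j ∈ s, g (e j) := by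
  ext x
  simp only [Set.mem_iInter, Finset.mem_map]
  constructor
  · intro h j hj; exact h (e j) ⟨j, hj, rfl⟩
  · rintro h i ⟨j, hj, rfl⟩; exact h j hj

lemma GP'_deleted {n : ℕ} {f : Fin (n+1) → Lin} {c : Fin (n+1) → ℝ}
    {S : AffineSubspace ℝ (Fin d → ℝ)} {m : ℕ} (h : GP' f c S m) :
    GP' (f ∘ Fin.castSucc) (c ∘ Fin.castSucc) S m := by
  constructor
  · intro s hsne hscard
    obtain ⟨T, hT1, hT2, hT3⟩ := h.1 (s.map Fin.castSuccEmb)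
      (by simpa using hsne) (by simpa using hscard)
    refine ⟨T, ?_, hT2, by simpa using hT3⟩
    rw [hT1, biInter_map]
    rfl
  · intro s hscard
    have := h.2 (s.map Fin.castSuccEmb) (by simpa using hscard)
    rw [biInter_map] at this
    exact this

lemma last_not_mem_map {n : ℕ} (s : Finset (Fin n)) :
    Fin.last n ∉ s.map Fin.castSuccEmb := by
  simp only [Finset.mem_map]
  rintro ⟨j, -, hj⟩
  exact absurd hj (Fin.castSucc_lt_last j).ne

lemma GP'_restricted {n : ℕ} {f : Fin (n+1) → Lin} {c : Fin (n+1) → ℝ}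
    {S : AffineSubspace ℝ (Fin d → ℝ)} {k : ℕ} (h : GP' f c S (k+1)) :
    GP' (f ∘ Fin.castSucc) (c ∘ Fin.castSucc)
      (S ⊓ hyp (f (Fin.last n)) (c (Fin.last n))) k := by
  have hins : ∀ s : Finset (Fin n),
      (S : Set (Fin d → ℝ)) ∩
          (⋂ i ∈ insert (Fin.last n) (s.map Fin.castSuccEmb), {x : Fin d → ℝ | f i x = c i})
        = ((S ⊓ hyp (f (Fin.last n)) (c (Fin.last n)) :
              AffineSubspace ℝ (Fin d → ℝ)) : Set (Fin d → ℝ)) ∩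
          ⋂ j ∈ s, {x : Fin d → ℝ | (f ∘ Fin.castSucc) j x = (c ∘ Fin.castSucc) j} := by
    intro s
    rw [Finset.set_biInter_insert, biInter_map, coe_inf_aff]
    have : (hyp (f (Fin.last n)) (c (Fin.last n)) : Set (Fin d → ℝ))
        = {x : Fin d → ℝ | f (Fin.last n) x = c (Fin.last n)} := by
      ext x; exact mem_hyp
    rw [this]
    ext x
    simp only [Set.mem_inter_iff, Set.mem_iInter, Set.mem_setOf_eq, Function.comp_apply]
    tauto
  constructor
  · intro s hsne hscard
    obtain ⟨T, hT1, hT2, hT3⟩ := h.1 (insert (Fin.last n) (s.map Fin.castSuccEmb))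
      ⟨_, Finset.mem_insert_self _ _⟩
      (by rw [Finset.card_insert_of_notMem (last_not_mem_map s)]; simpa using hscard)
    refine ⟨T, ?_, hT2, ?_⟩
    · rw [hT1, hins]
    · rw [hT3, Finset.card_insert_of_notMem (last_not_mem_map s)]
      simp only [Finset.card_map]
      omega
  · intro s hscard
    have := h.2 (insert (Fin.last n) (s.map Fin.castSuccEmb))
      (by rw [Finset.card_insert_of_notMem (last_not_mem_map s)]; simpa using hscard)
    rw [hins] at this
    exact this

lemma GP'_inf_hyp_eq {n : ℕ} {f : Fin (n+1) → Lin} {c : Fin (n+1) → ℝ}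
    {S : AffineSubspace ℝ (Fin d → ℝ)} {k : ℕ} (h : GP' f c S (k+1)) :
    ((S ⊓ hyp (f (Fin.last n)) (c (Fin.last n)) :
        AffineSubspace ℝ (Fin d → ℝ)) : Set (Fin d → ℝ)).Nonempty ∧
    finrank ℝ (S ⊓ hyp (f (Fin.last n)) (c (Fin.last n))).direction = k := by
  obtain ⟨T, hT1, hT2, hT3⟩ := h.1 {Fin.last n} ⟨_, Finset.mem_singleton_self _⟩ (by simp)
  have hTeq : T = S ⊓ hyp (f (Fin.last n)) (c (Fin.last n)) := by
    apply SetLike.coe_injective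
    rw [hT1, coe_inf_aff]
    congr 1
    ext x
    simp only [Set.mem_iInter, Finset.mem_singleton, Set.mem_setOf_eq, mem_hyp, SetLike.mem_coe]
    constructor
    · intro hx; exact hx _ rfl
    · rintro hx i rfl; exact hx
  constructor
  · rw [← hTeq]; exact hT2
  · rw [← hTeq, hT3]; simp

lemma card_realized_eq_of_GP : ∀ {n : ℕ} (f : Fin n → Lin) (c : Fin n → ℝ)
    (S : AffineSubspace ℝ (Fin d → ℝ)), (S : Set (Fin d → ℝ)).Nonempty →
    ∀ m : ℕ, finrank ℝ S.direction = m → GP' f c S m →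
    (realized f c S).card = Phi n m := by
  intro n
  induction n with
  | zero =>
      intro f c S hS m _ _
      rw [card_realized_zero f c S hS, Phi_zero_left]
  | succ n ih =>
      intro f c S hS m hrank hGP
      cases m with
      | zero =>
          -- S is a single point not on any hyperplane
          obtain ⟨p, hp⟩ := hS
          have hdir : S.direction = ⊥ := Submodule.finrank_eq_zero.mp hrank
          have hpt : ∀ x ∈ S, x = p := by
            intro x hx
            have : x -ᵥ p ∈ S.direction := AffineSubspace.vsub_mem_direction hx hp
            rw [hdir, Submodule.mem_bot] at this
            have : x - p = 0 := this
            have := sub_eq_zero.mp this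
            exact this
          have hne : ∀ i : Fin (n+1), f i p - c i ≠ 0 := by
            intro i hzero
            have h2 := hGP.2 {i} (by simp)
            have hpmem : p ∈ (S : Set (Fin d → ℝ)) ∩
                ⋂ j ∈ ({i} : Finset (Fin (n+1))), {x : Fin d → ℝ | f j x = c j} := by
              refine ⟨hp, ?_⟩
              simp only [Set.mem_iInter, Finset.mem_singleton, Set.mem_setOf_eq]
              rintro j rfl
              linarith
            rw [h2] at hpmem
            exact hpmem
          have hreal : realized f c S = {fun i => decide (0 < f i p - c i)} := by
            apply Finset.eq_singleton_iff_unique_mem.mpr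
            constructor
            · refine mem_realized.mpr ⟨p, hp, fun i => ?_⟩
              rcases lt_trichotomy (f i p - c i) 0 with hlt | heq | hgt
              · rw [decide_eq_false (by linarith)]
                simpa using hlt
              · exact absurd heq (hne i)
              · rw [decide_eq_true hgt]
                simpa using hgt
            · intro σ hσ
              obtain ⟨x, hxS, hx⟩ := mem_realized.mp hσ
              have hxp := hpt x hxS
              subst hxp
              funext i
              have := hx i
              rcases hb : σ i with _|_ <;> rw [hb] at this <;> simp at this
              · exact (decide_eq_false (by linarith)).symm
              · exact (decide_eq_true (by linarith : 0 < f i x - c i)).symm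
          rw [hreal, Finset.card_singleton, Phi_zero_right]
      | succ k =>
          -- nonconstancy of the last functional on S
          obtain ⟨hne', hrank'⟩ := GP'_inf_hyp_eq hGP
          have hv : ∃ v ∈ S.direction, f (Fin.last n) v ≠ 0 := by
            by_contra hcon
            push_neg at hcon
            obtain ⟨z, hz⟩ := hne'
            have hzS : z ∈ S := (mem_inf'.mp hz).1
            have hzH : f (Fin.last n) z = c (Fin.last n) := mem_hyp.mp (mem_inf'.mp hz).2
            have hSsub : (S : Set (Fin d → ℝ))
                = ((S ⊓ hyp (f (Fin.last n)) (c (Fin.last n)) :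
                    AffineSubspace ℝ (Fin d → ℝ)) : Set (Fin d → ℝ)) := by
              rw [coe_inf_aff]
              apply Set.Subset.antisymm
              · intro x hx
                refine ⟨hx, ?_⟩
                have hmem : x -ᵥ z ∈ S.direction := AffineSubspace.vsub_mem_direction hx hzS
                have h0 := hcon _ hmem
                have : f (Fin.last n) x - f (Fin.last n) z = 0 := by
                  simpa [vsub_eq_sub, map_sub] using h0
                show x ∈ hyp (f (Fin.last n)) (c (Fin.last n))
                rw [mem_hyp]
                linarith
              · exact Set.inter_subset_left
            have hSeq : S = S ⊓ hyp (f (Fin.last n)) (c (Fin.last n)) :=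
              SetLike.coe_injective hSsub
            rw [← hSeq] at hrank'
            omega
          obtain ⟨v, hvdir, hvne⟩ := hv
          rw [card_realized_succ f c S hvdir hvne, Phi_pascal]
          have h1 := ih (f ∘ Fin.castSucc) (c ∘ Fin.castSucc) S hS (k+1) hrank
            (GP'_deleted hGP)
          have h2 := ih (f ∘ Fin.castSucc) (c ∘ Fin.castSucc)
            (S ⊓ hyp (f (Fin.last n)) (c (Fin.last n))) hne' k hrank'
            (GP'_restricted hGP)
          omega


def chamber (f : Fin n → Lin) (c : Fin n → ℝ) (σ : Fin n → Bool) : Set (Fin d → ℝ) :=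
  {x | ∀ i, 0 < (if σ i then (1:ℝ) else -1) * (f i x - c i)}

lemma chamber_convex (f : Fin n → Lin) (c : Fin n → ℝ) (σ : Fin n → Bool) : Convex ℝ (chamber f c σ) := by
  intro x hx y hy a b ha hb hab
  intro i
  have hval : (if σ i then (1:ℝ) else -1) * (f i (a • x + b • y) - c i)
      = a * ((if σ i then (1:ℝ) else -1) * (f i x - c i))
        + b * ((if σ i then (1:ℝ) else -1) * (f i y - c i)) := by
    simp only [map_add, map_smul, smul_eq_mul]
    linear_combination ((if σ i = true then (1:ℝ) else -1) * c i) * hab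
  show 0 < (if σ i then (1:ℝ) else -1) * (f i (a • x + b • y) - c i)
  rw [hval]
  have h1 := hx i
  have h2 := hy i
  rcases eq_or_lt_of_le ha with rfl | ha'
  · simp only [zero_mul, zero_add] at *
    have : b = 1 := by linarith
    nlinarith
  · nlinarith

lemma chamber_open (f : Fin n → Lin) (c : Fin n → ℝ) (σ : Fin n → Bool) : IsOpen (chamber f c σ) := by
  have : chamber f c σ
      = ⋂ i, {x : Fin d → ℝ | 0 < (if σ i then (1:ℝ) else -1) * (f i x - c i)} := by
    ext x; simp [chamber]
  rw [this]
  refine isOpen_iInter_of_finite fun i => ?_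
  have hcont : Continuous fun x : Fin d → ℝ =>
      (if σ i then (1:ℝ) else -1) * (f i x - c i) := by
    have h1 : Continuous (f i) := (f i).continuous_of_finiteDimensional
    fun_prop
  exact isOpen_lt continuous_const hcont

lemma chamber_subset (f : Fin n → Lin) (c : Fin n → ℝ) (σ : Fin n → Bool) {x : Fin d → ℝ} (hx : x ∈ chamber f c σ) :
    ∀ i, f i x ≠ c i := by
  intro i heq
  have := hx i
  rw [heq] at this
  simp at this

lemma chamber_svec (f : Fin n → Lin) (c : Fin n → ℝ) {x : Fin d → ℝ} (hx : ∀ i, f i x ≠ c i) :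
    x ∈ chamber f c (fun i => decide (0 < f i x - c i)) := by
  intro i
  show 0 < (if decide (0 < f i x - c i) = true then (1:ℝ) else -1) * (f i x - c i)
  rcases lt_trichotomy (f i x - c i) 0 with hlt | heq | hgt
  · rw [decide_eq_false (by linarith)]; simpa using hlt
  · exact absurd (by linarith) (hx i)
  · rw [decide_eq_true hgt]; simpa using hgt

lemma chamber_unique (f : Fin n → Lin) (c : Fin n → ℝ) {σ : Fin n → Bool} {x : Fin d → ℝ} (hx : x ∈ chamber f c σ) :
    σ = fun i => decide (0 < f i x - c i) := by
  funext i
  have := hx i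
  rcases hb : σ i with _|_ <;> rw [hb] at this <;> simp at this
  · exact (decide_eq_false (by linarith)).symm
  · exact (decide_eq_true (by linarith : 0 < f i x - c i)).symm

lemma numComponents_eq_card_realized (f : Fin n → Lin) (c : Fin n → ℝ) :
    Nat.card (ConnectedComponents ↥{x : Fin d → ℝ | ∀ i, f i x ≠ c i})
      = (realized f c (⊤ : AffineSubspace ℝ (Fin d → ℝ))).card := by
  classical
  set U : Set (Fin d → ℝ) := {x | ∀ i, f i x ≠ c i} with hU
  set sv : ↥U → (Fin n → Bool) := fun x => fun i => decide (0 < f i x.val - c i) with hsv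
  set C : (Fin n → Bool) → Set ↥U := fun σ => Subtype.val ⁻¹' chamber f c σ with hC
  have hmemC : ∀ x : ↥U, x ∈ C (sv x) := fun x => chamber_svec f c x.property
  have huniq : ∀ {σ : Fin n → Bool} {x : ↥U}, x ∈ C σ → σ = sv x :=
    fun {σ x} hx => chamber_unique f c hx
  have hCopen : ∀ σ, IsOpen (C σ) :=
    fun σ => (chamber_open f c σ).preimage continuous_subtype_val
  have hCclosed : ∀ σ, IsClosed (C σ) := by
    intro σ
    rw [← isOpen_compl_iff]
    have hcompl : (C σ)ᶜ = ⋃ τ, ⋃ _ : τ ≠ σ, C τ := by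
      ext x
      simp only [Set.mem_compl_iff, Set.mem_iUnion]
      constructor
      · intro hx
        exact ⟨sv x, fun h => hx (h ▸ hmemC x), hmemC x⟩
      · rintro ⟨τ, hτ, hxτ⟩ hxσ
        exact hτ ((huniq hxτ).trans (huniq hxσ).symm)
    rw [hcompl]
    exact isOpen_iUnion fun τ => isOpen_iUnion fun _ => hCopen τ
  have hCpre : ∀ σ, IsPreconnected (C σ) := by
    intro σ
    rw [← Topology.IsInducing.subtypeVal.isPreconnected_image]
    have himg : Subtype.val '' (C σ) = chamber f c σ := by
      rw [hC]
      rw [Subtype.image_preimage_coe]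
      exact Set.inter_eq_right.mpr (fun x hx => chamber_subset f c σ hx)
    rw [himg]
    exact (chamber_convex f c σ).isPreconnected
  have hcomp : ∀ x : ↥U, connectedComponent x = C (sv x) := by
    intro x
    apply Set.Subset.antisymm
    · exact IsClopen.connectedComponent_subset ⟨hCclosed _, hCopen _⟩ (hmemC x)
    · exact (hCpre _).subset_connectedComponent (hmemC x)
  -- build the bijection
  have hconst : ∀ a b : ↥U, connectedComponent a = connectedComponent b → sv a = sv b := by
    intro a b hab
    have : b ∈ connectedComponent a := hab ▸ mem_connectedComponent
    rw [hcomp a] at this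
    exact huniq this
  set F : ConnectedComponents ↥U → (Fin n → Bool) :=
    Quotient.lift (fun x : ↥U => sv x) hconst with hF
  have hFinj : Function.Injective F := by
    intro a b
    induction a using Quotient.ind
    induction b using Quotient.ind
    rename_i a b
    intro hab
    have hab' : sv a = sv b := hab
    apply Quotient.sound
    show connectedComponent a = connectedComponent b
    rw [hcomp a, hcomp b, hab']
  have hFrange : Set.range F = ↑(realized f c (⊤ : AffineSubspace ℝ (Fin d → ℝ))) := by
    ext σ
    simp only [Set.mem_range, Finset.coe_sort_coe, Finset.mem_coe]
    constructor
    · rintro ⟨q, rfl⟩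
      induction q using Quotient.ind
      rename_i x
      refine mem_realized.mpr ⟨x.val, trivial, ?_⟩
      exact hmemC x
    · intro hσ
      obtain ⟨x, -, hx⟩ := mem_realized.mp hσ
      have hxU : x ∈ U := chamber_subset f c σ hx
      refine ⟨Quotient.mk _ ⟨x, hxU⟩, ?_⟩
      show sv ⟨x, hxU⟩ = σ
      exact (huniq (x := ⟨x, hxU⟩) hx).symm
  have e : ConnectedComponents ↥U ≃ ↥(realized f c (⊤ : AffineSubspace ℝ (Fin d → ℝ))) :=
    (Equiv.ofInjective F hFinj).trans (Equiv.setCongr hFrange)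
  rw [Nat.card_congr e]
  exact Nat.card_eq_finsetCard _

end ZasProof

/-- the complement of `n` affine hyperplanes in `ℝ^d` has at most
`Φ(n, d)` connected components, and exactly `Φ(n, d)` if the arrangement is in
general position (Zaslavsky). -/
theorem complement_components_Phi {d n : ℕ} (hd : 1 ≤ d)
    (f : Fin n → ((Fin d → ℝ) →ₗ[ℝ] ℝ)) (c : Fin n → ℝ)
    (hf : ∀ i, f i ≠ 0) :
    numComponents ((Set.univ : Set (Fin d → ℝ)) \
        ⋃ i : Fin n, {x : Fin d → ℝ | f i x = c i}) ≤ Phi n d ∧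
    (InGeneralPosition f c →
      numComponents ((Set.univ : Set (Fin d → ℝ)) \
          ⋃ i : Fin n, {x : Fin d → ℝ | f i x = c i}) = Phi n d) := by
  have hset : (Set.univ : Set (Fin d → ℝ)) \ (⋃ i : Fin n, {x : Fin d → ℝ | f i x = c i})
      = {x : Fin d → ℝ | ∀ i, f i x ≠ c i} := by
    ext x
    simp [Set.mem_diff, Set.mem_iUnion]
  have hnum : numComponents ((Set.univ : Set (Fin d → ℝ)) \
        ⋃ i : Fin n, {x : Fin d → ℝ | f i x = c i})
      = (realized f c (⊤ : AffineSubspace ℝ (Fin d → ℝ))).card := by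
    rw [numComponents, hset]
    exact numComponents_eq_card_realized f c
  have htop : (((⊤ : AffineSubspace ℝ (Fin d → ℝ)) : Set (Fin d → ℝ))).Nonempty :=
    ⟨0, trivial⟩
  have hrank : Module.finrank ℝ (⊤ : AffineSubspace ℝ (Fin d → ℝ)).direction = d := by
    rw [AffineSubspace.direction_top]
    rw [finrank_top]
    simp [Module.finrank_pi]
  constructor
  · rw [hnum]
    exact card_realized_le f c ⊤ htop d (le_of_eq hrank)
  · intro hGP
    rw [hnum]
    refine card_realized_eq_of_GP f c ⊤ htop d hrank ⟨?_, ?_⟩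
    · intro s hs1 hs2
      obtain ⟨S, hS1, hS2, hS3⟩ := hGP.1 s hs1 hs2
      exact ⟨S, by rw [hS1]; simp, hS2, hS3⟩
    · intro s hs
      have := hGP.2 s hs
      rw [this]
      simp
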